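/- For any Hausdorff space X, |X| ≤ πχ(X)^(c(X)·nq(X)·wψ_c(X)). -/

import Mathlib

open Cardinal Set TopologicalSpace

universe u

/-- The density of a space: the least cardinality of a dense subset. -/
noncomputable def dens (X : Type u) [TopologicalSpace X] : Cardinal.{u} :=
  sInf {c : Cardinal.{u} | ∃ D : Set X, Dense D ∧ #D = c}

/-- A local π-base at a point: a family of nonempty open sets such that every
open set containing the point contains a member of the family. -/
def IsLocalPiBase (X : Type u) [TopologicalSpace X] (x : X) (𝒱 : Set (Set X)) : Prop :=
  (∀ V ∈ 𝒱, IsOpen V ∧ V.Nonempty) ∧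
    ∀ U : Set X, IsOpen U → x ∈ U → ∃ V ∈ 𝒱, V ⊆ U

/-- The π-character at a point: the least infinite cardinality of a local π-base. -/
noncomputable def piCharPoint (X : Type u) [TopologicalSpace X] (x : X) : Cardinal.{u} :=
  sInf {κ : Cardinal.{u} | ℵ₀ ≤ κ ∧ ∃ 𝒱 : Set (Set X), IsLocalPiBase X x 𝒱 ∧ #𝒱 ≤ κ}

/-- The π-character of a space. -/
noncomputable def piChar (X : Type u) [TopologicalSpace X] : Cardinal.{u} :=
  ⨆ x : X, piCharPoint X x

/-- A π-base for a space. -/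
def IsPiBase (X : Type u) [TopologicalSpace X] (𝒱 : Set (Set X)) : Prop :=
  (∀ V ∈ 𝒱, IsOpen V ∧ V.Nonempty) ∧
    ∀ U : Set X, IsOpen U → U.Nonempty → ∃ V ∈ 𝒱, V ⊆ U

/-- The π-weight of a space: the least infinite cardinality of a π-base. -/
noncomputable def piWeight (X : Type u) [TopologicalSpace X] : Cardinal.{u} :=
  sInf {κ : Cardinal.{u} | ℵ₀ ≤ κ ∧ ∃ 𝒱 : Set (Set X), IsPiBase X 𝒱 ∧ #𝒱 ≤ κ}

/-- The cellularity of a space: the least infinite cardinal bounding the size of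
every pairwise disjoint family of nonempty open sets. -/
noncomputable def cellularity (X : Type u) [TopologicalSpace X] : Cardinal.{u} :=
  sInf {κ : Cardinal.{u} | ℵ₀ ≤ κ ∧ ∀ 𝒞 : Set (Set X),
    (∀ U ∈ 𝒞, IsOpen U ∧ U.Nonempty) → 𝒞.PairwiseDisjoint id → #𝒞 ≤ κ}

/-- The set of infinite cardinals κ witnessing the nonquasiregularity degree:
every nonempty open set U contains a nonempty set ⋂₀ 𝒱 with 𝒱 an open family of
size at most κ and ⋂_{V ∈ 𝒱} cl V ⊆ U. -/
def nqSet (X : Type u) [TopologicalSpace X] : Set Cardinal.{u} :=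
  {κ : Cardinal.{u} | ℵ₀ ≤ κ ∧ ∀ U : Set X, IsOpen U → U.Nonempty →
    ∃ 𝒱 : Set (Set X), (∀ V ∈ 𝒱, IsOpen V) ∧ #𝒱 ≤ κ ∧
      (⋂₀ 𝒱).Nonempty ∧ (⋂ V ∈ 𝒱, closure V) ⊆ U}

/-- A space is an nq-space if its nonquasiregularity degree is defined. -/
def IsNqSpace (X : Type u) [TopologicalSpace X] : Prop :=
  (nqSet X).Nonempty

/-- The nonquasiregularity degree of a space. -/
noncomputable def nq (X : Type u) [TopologicalSpace X] : Cardinal.{u} :=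
  sInf (nqSet X)

/-- The closed pseudocharacter at a point. -/
noncomputable def psiCPoint (X : Type u) [TopologicalSpace X] (x : X) : Cardinal.{u} :=
  sInf {κ : Cardinal.{u} | ℵ₀ ≤ κ ∧ ∃ 𝒱 : Set (Set X),
    (∀ V ∈ 𝒱, IsOpen V ∧ x ∈ V) ∧ #𝒱 ≤ κ ∧ (⋂ V ∈ 𝒱, closure V) = {x}}

/-- The closed pseudocharacter of a space. -/
noncomputable def psiC (X : Type u) [TopologicalSpace X] : Cardinal.{u} :=
  sInf {κ : Cardinal.{u} | ℵ₀ ≤ κ ∧ ∀ x : X, ∃ 𝒱 : Set (Set X),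
    (∀ V ∈ 𝒱, IsOpen V ∧ x ∈ V) ∧ #𝒱 ≤ κ ∧ (⋂ V ∈ 𝒱, closure V) = {x}}

/-- The dense closed pseudocharacter of a space. -/
noncomputable def dPsiC (X : Type u) [TopologicalSpace X] : Cardinal.{u} :=
  sInf {κ : Cardinal.{u} | ℵ₀ ≤ κ ∧ ∃ D : Set X, Dense D ∧ ∀ d ∈ D, psiCPoint X d ≤ κ}

/-- The weak closed pseudocharacter at a point: the least infinite cardinality of a
family 𝒱 of open sets with ⋂_{V ∈ 𝒱} cl V = {x}. -/
noncomputable def wPsiCPoint (X : Type u) [TopologicalSpace X] (x : X) : Cardinal.{u} :=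
  sInf {κ : Cardinal.{u} | ℵ₀ ≤ κ ∧ ∃ 𝒱 : Set (Set X),
    (∀ V ∈ 𝒱, IsOpen V) ∧ #𝒱 ≤ κ ∧ (⋂ V ∈ 𝒱, closure V) = {x}}

/-- The weak closed pseudocharacter of a space. -/
noncomputable def wPsiC (X : Type u) [TopologicalSpace X] : Cardinal.{u} :=
  ⨆ x : X, wPsiCPoint X x

/-- The pseudocharacter of a space: the least infinite cardinal κ such that every
point is the intersection of at most κ open sets. -/
noncomputable def psi (X : Type u) [TopologicalSpace X] : Cardinal.{u} :=
  sInf {κ : Cardinal.{u} | ℵ₀ ≤ κ ∧ ∀ x : X, ∃ 𝒱 : Set (Set X),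
    (∀ V ∈ 𝒱, IsOpen V) ∧ #𝒱 ≤ κ ∧ ⋂₀ 𝒱 = {x}}

/-- The Lindelöf degree of a space. -/
noncomputable def lindelofDegree (X : Type u) [TopologicalSpace X] : Cardinal.{u} :=
  sInf {κ : Cardinal.{u} | ℵ₀ ≤ κ ∧ ∀ 𝒰 : Set (Set X), (∀ U ∈ 𝒰, IsOpen U) →
    ⋃₀ 𝒰 = Set.univ → ∃ 𝒱 ⊆ 𝒰, #𝒱 ≤ κ ∧ ⋃₀ 𝒱 = Set.univ}

/-- The cardinality of the collection of regular open subsets of a space. -/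
noncomputable def cardRO (X : Type u) [TopologicalSpace X] : Cardinal.{u} :=
  #{R : Set X | R = interior (closure R)}

/-- A space is quasiregular if every nonempty open set contains a nonempty open
set whose closure is contained in it. -/
def Quasiregular (X : Type u) [TopologicalSpace X] : Prop :=
  ∀ U : Set X, IsOpen U → U.Nonempty →
    ∃ V : Set X, IsOpen V ∧ V.Nonempty ∧ closure V ⊆ U

/-!
Let `κ = c(X) · nq(X)`. Closing off along `κ⁺` gives a dense set of size at most `πχ(X) ^ κ`, and
the local π-bases at its points form a π-base `ℱ` of that size. For open `V` let `M V` be a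
maximal disjoint family of members of `ℱ` inside `V`; then `closure (⋃₀ M V) = closure V` and
`#(M V) ≤ c(X)`. If `𝒱` is a weak closed pseudobase at `x`, then `x` is the only point of
`⋂ V ∈ 𝒱, closure (⋃₀ M V)`, so `x ↦ M '' 𝒱` embeds `X` into a set of size
`(πχ(X) ^ κ) ^ wψ_c(X)`.
-/

section ClosingOff

variable {α : Type u} {κ G : Cardinal.{u}}

lemma exists_forall_lt_of_mk_le (hκ : ℵ₀ ≤ κ) {ι : Type u} (hι : #ι ≤ κ)
    (g : ι → (Order.succ κ).ord.ToType) : ∃ j, ∀ i, g i < j := by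
  by_contra! h
  have hcof : Order.cof (Order.succ κ).ord.ToType ≤ #(range g) :=
    Order.cof_le fun j => let ⟨i, hi⟩ := h j; ⟨g i, mem_range_self i, hi⟩
  rw [Ordinal.cof_toType, (isRegular_succ hκ).cof_ord] at hcof
  exact (Order.lt_succ κ).not_ge (hcof.trans (mk_range_le.trans hι))

lemma mk_bounded_subset_le_of_power_le {s : Set α} (hs : #s ≤ G) (hG : ℵ₀ ≤ G)
    (hGκ : G ^ κ ≤ G) : #{t : Set α // t ⊆ s ∧ #t ≤ κ} ≤ G :=
  (mk_bounded_subset_le s κ).trans ((power_le_power_right (max_le hs hG)).trans hGκ)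

lemma lt_of_power_le_self (hG : ℵ₀ ≤ G) (hGκ : G ^ κ ≤ G) : κ < G :=
  (cantor κ).trans_le ((power_le_power_right ((natCast_lt_aleph0 (n := 2)).le.trans hG)).trans hGκ)

/-- Closing off under an operation `W` with at most `κ` arguments, by iterating along `κ⁺`:
by regularity of `κ⁺`, any `κ` points of the union already appear at a common earlier stage. -/
theorem exists_closed_of_mk_le (hκ : ℵ₀ ≤ κ) (hG : ℵ₀ ≤ G) (hGκ : G ^ κ ≤ G)
    (W : Set α → Set α) (hW : ∀ T : Set α, #T ≤ κ → #(W T) ≤ G) :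
    ∃ S : Set α, #S ≤ G ∧ ∀ T ⊆ S, #T ≤ κ → W T ⊆ S := by
  let step (A : Set α) : Set α := A ∪ ⋃ T : {T : Set α // T ⊆ A ∧ #T ≤ κ}, W T.1
  obtain ⟨I, hI⟩ : ∃ I : (Order.succ κ).ord.ToType → Set α,
      ∀ j, I j = step (⋃ i : Iio j, I i) :=
    ⟨WellFoundedLT.fix fun j I => step (⋃ i : Iio j, I i i.2), WellFoundedLT.fix_eq _⟩
  have hκG : κ ≤ G := (lt_of_power_le_self hG hGκ).le
  have hstep (A : Set α) (hA : #A ≤ G) : #(step A) ≤ G := by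
    refine (mk_union_le _ _).trans ((add_le_add hA ((mk_iUnion_le _).trans ?_)).trans
      (add_eq_self hG).le)
    calc _ ≤ G * G := mul_le_mul' (mk_bounded_subset_le_of_power_le hA hG hGκ)
            (ciSup_le' fun T : {T : Set α // T ⊆ A ∧ #T ≤ κ} => hW T T.2.2)
      _ = G := mul_eq_self hG
  have hIcard (j) : #(I j) ≤ G := by
    induction j using WellFoundedLT.induction with
    | ind j IH =>
      rw [hI j]
      refine hstep _ ((mk_iUnion_le _).trans ?_)
      calc _ ≤ κ * G := mul_le_mul' (Order.lt_succ_iff.mp (by simpa using mk_Iio_lt j))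
              (ciSup_le' fun i : Iio j => IH i i.2)
        _ ≤ G * G := mul_le_mul' hκG le_rfl
        _ = G := mul_eq_self hG
  refine ⟨⋃ j, I j, (mk_iUnion_le _).trans ?_, fun T hT hTκ => ?_⟩
  · calc _ ≤ G * G := mul_le_mul' (by simpa using Order.succ_le_of_lt (lt_of_power_le_self hG hGκ))
            (ciSup_le' hIcard)
      _ = G := mul_eq_self hG
  choose g hg using fun t : T => mem_iUnion.mp (hT t.2)
  obtain ⟨j, hj⟩ := exists_forall_lt_of_mk_le hκ hTκ g
  have hTj : T ⊆ ⋃ i : Iio j, I i := fun t ht =>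
    mem_iUnion.mpr ⟨⟨g ⟨t, ht⟩, hj ⟨t, ht⟩⟩, hg ⟨t, ht⟩⟩
  refine Subset.trans ?_ (subset_iUnion I j)
  rw [hI j]
  exact fun x hx => mem_union_right _ (mem_iUnion.mpr ⟨⟨T, hTj, hTκ⟩, hx⟩)

end ClosingOff

lemma exists_maximal_pairwiseDisjoint {α : Type*} (𝒮 : Set (Set α)) :
    ∃ 𝒜, Maximal (fun 𝒜 : Set (Set α) => 𝒜 ⊆ 𝒮 ∧ 𝒜.PairwiseDisjoint id) 𝒜 :=
  zorn_subset _ fun c hc hchain =>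
    ⟨⋃₀ c, ⟨sUnion_subset fun _ h𝒜 => (hc h𝒜).1,
      (pairwiseDisjoint_sUnion hchain.directedOn).mpr fun _ h𝒜 => (hc h𝒜).2⟩,
      fun _ => subset_sUnion_of_mem⟩

section MaximalDisjoint

variable {X : Type u} [TopologicalSpace X]

lemma mem_closure_sUnion_of_maximal {ℱ 𝒜 ℬ : Set (Set X)} {W : Set X} {x : X} (hW : IsOpen W)
    (h𝒜 : Maximal (fun 𝒜 : Set (Set X) => 𝒜 ⊆ {P ∈ ℱ | P ⊆ W} ∧ 𝒜.PairwiseDisjoint id) 𝒜)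
    (hxW : x ∈ W) (hℬ : IsLocalPiBase X x ℬ) (hℬℱ : ℬ ⊆ ℱ) : x ∈ closure (⋃₀ 𝒜) := by
  by_contra hx
  obtain ⟨P, hPℬ, hPU⟩ := hℬ.2 _ (hW.inter isClosed_closure.isOpen_compl) ⟨hxW, hx⟩
  obtain ⟨y, hy⟩ := (hℬ.1 P hPℬ).2
  have hP𝒜 : P ∈ 𝒜 := h𝒜.mem_of_prop_insert
    ⟨insert_subset ⟨hℬℱ hPℬ, hPU.trans inter_subset_left⟩ h𝒜.prop.1,
      h𝒜.prop.2.insert fun A hA _ => disjoint_left.mpr fun z hzP hzA =>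
        (hPU hzP).2 (subset_closure ⟨A, hA, hzA⟩)⟩
  exact (hPU hy).2 (subset_closure ⟨P, hP𝒜, hy⟩)

lemma IsPiBase.isLocalPiBase {ℱ : Set (Set X)} (hℱ : IsPiBase X ℱ) (x : X) :
    IsLocalPiBase X x ℱ :=
  ⟨hℱ.1, fun U hU hxU => hℱ.2 U hU ⟨x, hxU⟩⟩

lemma closure_sUnion_eq_of_maximal {ℱ 𝒜 : Set (Set X)} {V : Set X} (hℱ : IsPiBase X ℱ)
    (hV : IsOpen V)
    (h𝒜 : Maximal (fun 𝒜 : Set (Set X) => 𝒜 ⊆ {P ∈ ℱ | P ⊆ V} ∧ 𝒜.PairwiseDisjoint id) 𝒜) :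
    closure (⋃₀ 𝒜) = closure V :=
  (closure_mono (sUnion_subset fun _ hA => (h𝒜.prop.1 hA).2)).antisymm <|
    closure_minimal (fun x hx => mem_closure_sUnion_of_maximal hV h𝒜 hx
      (hℱ.isLocalPiBase x) subset_rfl) isClosed_closure

lemma Dense.isPiBase_biUnion {S : Set X} (hS : Dense S) {B : X → Set (Set X)}
    (hB : ∀ x, IsLocalPiBase X x (B x)) : IsPiBase X (⋃ x ∈ S, B x) := by
  refine ⟨fun P hP => ?_, fun U hU hUne => ?_⟩
  · obtain ⟨x, -, hPx⟩ := mem_iUnion₂.mp hP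
    exact (hB x).1 P hPx
  · obtain ⟨x, hxU, hxS⟩ := hS.inter_open_nonempty U hU hUne
    obtain ⟨P, hP, hPU⟩ := (hB x).2 U hU hxU
    exact ⟨P, mem_biUnion hxS hP, hPU⟩

end MaximalDisjoint

lemma exists_subset_mk_le_forall_inter_nonempty {α : Type u} (𝔉 : Set (Set α)) :
    ∃ W : Set α, #W ≤ #𝔉 ∧ ∀ E ∈ 𝔉, E.Nonempty → (W ∩ E).Nonempty := by
  choose f hf using fun E : {E ∈ 𝔉 | E.Nonempty} => E.2.2
  exact ⟨range f, mk_range_le.trans (mk_le_mk_of_subset (sep_subset _ _)),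
    fun E hE hne => ⟨f ⟨E, hE, hne⟩, mem_range_self _, hf ⟨E, hE, hne⟩⟩⟩

lemma exists_subset_mk_le_of_subset_biUnion {α β : Type u} {S : Set α} {B : α → Set β}
    {𝒞 : Set β} (h : 𝒞 ⊆ ⋃ x ∈ S, B x) : ∃ T ⊆ S, #T ≤ #𝒞 ∧ 𝒞 ⊆ ⋃ x ∈ T, B x := by
  choose g hgS hg using fun c : 𝒞 => mem_iUnion₂.mp (h c.2)
  exact ⟨range g, range_subset_iff.mpr hgS, mk_range_le,
    fun c hc => mem_biUnion (mem_range_self ⟨c, hc⟩) (hg ⟨c, hc⟩)⟩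

lemma mk_biUnion_le_of_le {α β : Type u} {G : Cardinal.{u}} (hG : ℵ₀ ≤ G) {T : Set α}
    {B : α → Set β} (hT : #T ≤ G) (hB : ∀ x, #(B x) ≤ G) : #(⋃ x ∈ T, B x) ≤ G :=
  (mk_biUnion_le _ _).trans <| (mul_le_mul' hT (ciSup_le' fun x : T => hB x)).trans
    (mul_eq_self hG).le

section CardinalBounds

variable {X : Type u} [TopologicalSpace X] {κ : Cardinal.{u}}

theorem mk_le_power_of_isPiBase {w G : Cardinal.{u}} (hG : ℵ₀ ≤ G) (hGκ : G ^ κ ≤ G)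
    {ℱ : Set (Set X)} (hℱ : IsPiBase X ℱ) (hℱG : #ℱ ≤ G)
    (hcell : ∀ 𝒞 : Set (Set X), (∀ U ∈ 𝒞, IsOpen U ∧ U.Nonempty) →
      𝒞.PairwiseDisjoint id → #𝒞 ≤ κ)
    (hw : ∀ x : X, ∃ 𝒱 : Set (Set X),
      (∀ V ∈ 𝒱, IsOpen V) ∧ #𝒱 ≤ w ∧ (⋂ V ∈ 𝒱, closure V) = {x}) :
    #X ≤ G ^ w := by
  choose 𝒱 h𝒱open h𝒱w h𝒱 using hw
  choose M hM using fun V : Set X => exists_maximal_pairwiseDisjoint {P ∈ ℱ | P ⊆ V}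
  have hMκ (V : Set X) : M V ∈ {𝒜 | 𝒜 ⊆ ℱ ∧ #𝒜 ≤ κ} :=
    ⟨fun P hP => ((hM V).prop.1 hP).1,
      hcell _ (fun P hP => hℱ.1 P ((hM V).prop.1 hP).1) (hM V).prop.2⟩
  have hrecover (x : X) : ⋂ 𝒜 ∈ M '' 𝒱 x, closure (⋃₀ 𝒜) = {x} := by
    rw [biInter_image, ← h𝒱 x]
    exact iInter₂_congr fun V hV => closure_sUnion_eq_of_maximal hℱ (h𝒱open x V hV) (hM V)
  calc #X ≤ #{𝔄 | 𝔄 ⊆ {𝒜 | 𝒜 ⊆ ℱ ∧ #𝒜 ≤ κ} ∧ #𝔄 ≤ w} := by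
        refine mk_le_of_injective (f := fun x => ⟨M '' 𝒱 x,
          image_subset_iff.mpr fun V _ => hMκ V, mk_image_le.trans (h𝒱w x)⟩) fun x y hxy => ?_
        simpa only [hrecover, singleton_eq_singleton_iff] using
          congrArg (fun 𝔄 => ⋂ 𝒜 ∈ 𝔄.1, closure (⋃₀ 𝒜)) hxy
    _ ≤ G ^ w := (mk_bounded_subset_le _ w).trans (power_le_power_right
        (max_le (mk_bounded_subset_le_of_power_le hℱG hG hGκ) hG))

/-- Close off under adding, for every `κ` families `𝒜` of at most `κ` members of the local
π-bases at `κ` points, a point outside all the closures `closure (⋃₀ 𝒜)` whenever there is one.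
If the result `S` were not dense, the nq-family `𝒱` of `(closure S)ᶜ` together with maximal
disjoint families `𝒜 V` inside `(closure V)ᶜ` would call for such a point (any point of `⋂₀ 𝒱`
qualifies), so one lies in `S`; being in `S` it lies in every `closure V` (maximality), hence in
`(closure S)ᶜ`. -/
theorem exists_dense_mk_le_power {p : Cardinal.{u}} (hp : ℵ₀ ≤ p) {B : X → Set (Set X)}
    (hB : ∀ x, IsLocalPiBase X x (B x)) (hBp : ∀ x, #(B x) ≤ p)
    (hcell : ∀ 𝒞 : Set (Set X), (∀ U ∈ 𝒞, IsOpen U ∧ U.Nonempty) →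
      𝒞.PairwiseDisjoint id → #𝒞 ≤ κ)
    (hnq : κ ∈ nqSet X) : ∃ S : Set X, Dense S ∧ #S ≤ p ^ κ := by
  have hκ : ℵ₀ ≤ κ := hnq.1
  have hκ1 : 1 ≤ κ := one_le_aleph0.trans hκ
  have hG : ℵ₀ ≤ p ^ κ := hp.trans (self_le_power p hκ1)
  have hGκ : (p ^ κ) ^ κ ≤ p ^ κ := by rw [← power_mul, mul_eq_self hκ]
  let avoid (𝔄 : Set (Set (Set X))) : Set X := ⋂ 𝒜 ∈ 𝔄, (closure (⋃₀ 𝒜))ᶜ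
  let families (T : Set X) : Set (Set (Set (Set X))) :=
    {𝔄 | 𝔄 ⊆ {𝒜 | 𝒜 ⊆ ⋃ x ∈ T, B x ∧ #𝒜 ≤ κ} ∧ #𝔄 ≤ κ}
  choose W hWcard hW using fun T => exists_subset_mk_le_forall_inter_nonempty (avoid '' families T)
  have hWG (T : Set X) (hT : #T ≤ κ) : #(W T) ≤ p ^ κ := by
    have hBT : #(⋃ x ∈ T, B x) ≤ p ^ κ := mk_biUnion_le_of_le hG
      (hT.trans (lt_of_power_le_self hG hGκ).le) fun x => (hBp x).trans (self_le_power p hκ1)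
    exact (hWcard T).trans (mk_image_le.trans (mk_bounded_subset_le_of_power_le
      (mk_bounded_subset_le_of_power_le hBT hG hGκ) hG hGκ))
  obtain ⟨S, hSG, hS⟩ := exists_closed_of_mk_le hκ hG hGκ W hWG
  refine ⟨S, by_contra fun hSd => ?_, hSG⟩
  obtain ⟨𝒱, h𝒱open, h𝒱κ, ⟨q, hq⟩, h𝒱S⟩ := hnq.2 _ isClosed_closure.isOpen_compl
    (nonempty_compl.mpr fun h => hSd (dense_iff_closure_eq.mpr h))
  choose 𝒜 h𝒜 using fun V : Set X =>
    exists_maximal_pairwiseDisjoint {P ∈ ⋃ x ∈ S, B x | P ⊆ (closure V)ᶜ}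
  have h𝒜κ (V : Set X) : #(𝒜 V) ≤ κ := hcell _ (fun P hP => by
    obtain ⟨x, -, hPx⟩ := mem_iUnion₂.mp ((h𝒜 V).prop.1 hP).1
    exact (hB x).1 P hPx) (h𝒜 V).prop.2
  obtain ⟨T, hTS, hT𝒞, hT⟩ := exists_subset_mk_le_of_subset_biUnion (𝒞 := ⋃ V ∈ 𝒱, 𝒜 V)
    (iUnion₂_subset fun V _ P hP => ((h𝒜 V).prop.1 hP).1)
  have hTκ : #T ≤ κ := hT𝒞.trans <| (mk_biUnion_le _ _).trans <|
    (mul_le_mul' h𝒱κ (ciSup_le' fun V : 𝒱 => h𝒜κ V)).trans (mul_eq_self hκ).le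
  have hq𝒜 : q ∈ avoid (𝒜 '' 𝒱) := by
    simp only [avoid, biInter_image, mem_iInter₂]
    intro V hV hqV
    have h𝒜V : ⋃₀ 𝒜 V ⊆ Vᶜ := sUnion_subset fun P hP =>
      ((h𝒜 V).prop.1 hP).2.trans (compl_subset_compl.mpr subset_closure)
    exact closure_minimal h𝒜V (h𝒱open V hV).isClosed_compl hqV (hq V hV)
  obtain ⟨x, hxW, hx𝒜⟩ := hW T _ ⟨𝒜 '' 𝒱, ⟨image_subset_iff.mpr fun V hV =>
    ⟨fun P hP => hT (mem_biUnion hV hP), h𝒜κ V⟩, mk_image_le.trans h𝒱κ⟩, rfl⟩ ⟨q, hq𝒜⟩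
  have hxS : x ∈ S := hS T hTS hTκ hxW
  refine h𝒱S (mem_iInter₂.mpr fun V hV => ?_) (subset_closure hxS)
  by_contra hxV
  exact mem_iInter₂.mp hx𝒜 _ (mem_image_of_mem 𝒜 hV) <|
    mem_closure_sUnion_of_maximal isClosed_closure.isOpen_compl (h𝒜 V) hxV (hB x)
      (subset_biUnion_of_mem hxS)

theorem exists_isPiBase_mk_le_power {p : Cardinal.{u}} (hp : ℵ₀ ≤ p) {B : X → Set (Set X)}
    (hB : ∀ x, IsLocalPiBase X x (B x)) (hBp : ∀ x, #(B x) ≤ p)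
    (hcell : ∀ 𝒞 : Set (Set X), (∀ U ∈ 𝒞, IsOpen U ∧ U.Nonempty) →
      𝒞.PairwiseDisjoint id → #𝒞 ≤ κ)
    (hnq : κ ∈ nqSet X) : ∃ ℱ : Set (Set X), IsPiBase X ℱ ∧ #ℱ ≤ p ^ κ := by
  have hκ1 : 1 ≤ κ := one_le_aleph0.trans hnq.1
  obtain ⟨S, hS, hSG⟩ := exists_dense_mk_le_power hp hB hBp hcell hnq
  exact ⟨_, hS.isPiBase_biUnion hB, mk_biUnion_le_of_le (hp.trans (self_le_power p hκ1)) hSG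
    fun x => (hBp x).trans (self_le_power p hκ1)⟩

end CardinalBounds

section Invariants

variable (X : Type u) [TopologicalSpace X]

lemma biInter_closure_isOpen_mem [T2Space X] (x : X) :
    ⋂ V ∈ {V : Set X | IsOpen V ∧ x ∈ V}, closure V = {x} := by
  refine subset_antisymm (fun y hy => ?_)
    (singleton_subset_iff.mpr (mem_iInter₂.mpr fun V hV => subset_closure hV.2))
  by_contra hyx
  obtain ⟨u, v, hu, hv, hyu, hxv, huv⟩ := t2_separation hyx
  exact (huv.closure_right hu).ne_of_mem hyu (mem_iInter₂.mp hy v ⟨hv, hxv⟩) rfl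

lemma cellularity_spec : ℵ₀ ≤ cellularity X ∧ ∀ 𝒞 : Set (Set X),
    (∀ U ∈ 𝒞, IsOpen U ∧ U.Nonempty) → 𝒞.PairwiseDisjoint id → #𝒞 ≤ cellularity X :=
  csInf_mem (s := {κ | ℵ₀ ≤ κ ∧ ∀ 𝒞 : Set (Set X),
      (∀ U ∈ 𝒞, IsOpen U ∧ U.Nonempty) → 𝒞.PairwiseDisjoint id → #𝒞 ≤ κ})
    ⟨max ℵ₀ #(Set X), le_max_left _ _, fun 𝒞 _ _ => (mk_set_le 𝒞).trans (le_max_right _ _)⟩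

lemma nq_mem_nqSet [T2Space X] : nq X ∈ nqSet X :=
  csInf_mem ⟨max ℵ₀ #(Set X), le_max_left _ _, fun _ _ ⟨x, hxU⟩ =>
    ⟨{V | IsOpen V ∧ x ∈ V}, fun _ hV => hV.1, (mk_set_le _).trans (le_max_right _ _),
      ⟨x, fun _ hV => hV.2⟩,
      (biInter_closure_isOpen_mem X x).trans_subset (singleton_subset_iff.mpr hxU)⟩⟩

variable {X} in
lemma mem_nqSet_of_le {κ μ : Cardinal.{u}} (hκ : κ ∈ nqSet X) (hκμ : κ ≤ μ) : μ ∈ nqSet X :=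
  ⟨hκ.1.trans hκμ, fun U hU hUne =>
    let ⟨𝒱, h𝒱open, h𝒱κ, h𝒱⟩ := hκ.2 U hU hUne
    ⟨𝒱, h𝒱open, h𝒱κ.trans hκμ, h𝒱⟩⟩

lemma piCharPoint_spec (x : X) :
    ℵ₀ ≤ piCharPoint X x ∧ ∃ 𝒱 : Set (Set X), IsLocalPiBase X x 𝒱 ∧ #𝒱 ≤ piCharPoint X x :=
  csInf_mem (s := {κ | ℵ₀ ≤ κ ∧ ∃ 𝒱 : Set (Set X), IsLocalPiBase X x 𝒱 ∧ #𝒱 ≤ κ})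
    ⟨max ℵ₀ #(Set X), le_max_left _ _, {V | IsOpen V ∧ V.Nonempty},
    ⟨fun _ hV => hV, fun U hU hxU => ⟨U, ⟨hU, x, hxU⟩, subset_rfl⟩⟩,
    (mk_set_le _).trans (le_max_right _ _)⟩

lemma piCharPoint_le_piChar (x : X) : piCharPoint X x ≤ piChar X :=
  le_ciSup bddAbove_of_small x

lemma aleph0_le_piChar [Nonempty X] : ℵ₀ ≤ piChar X :=
  (piCharPoint_spec X (Classical.arbitrary X)).1.trans (piCharPoint_le_piChar X _)

lemma exists_isLocalPiBase_mk_le_piChar :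
    ∃ B : X → Set (Set X), ∀ x, IsLocalPiBase X x (B x) ∧ #(B x) ≤ piChar X := by
  choose B hB hBcard using fun x => (piCharPoint_spec X x).2
  exact ⟨B, fun x => ⟨hB x, (hBcard x).trans (piCharPoint_le_piChar X x)⟩⟩

lemma exists_biInter_closure_eq_singleton_mk_le_wPsiC [T2Space X] (x : X) :
    ∃ 𝒱 : Set (Set X), (∀ V ∈ 𝒱, IsOpen V) ∧ #𝒱 ≤ wPsiC X ∧ (⋂ V ∈ 𝒱, closure V) = {x} := by
  obtain ⟨-, 𝒱, h𝒱open, h𝒱card, h𝒱⟩ := csInf_mem (s := {κ : Cardinal.{u} | ℵ₀ ≤ κ ∧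
      ∃ 𝒱 : Set (Set X), (∀ V ∈ 𝒱, IsOpen V) ∧ #𝒱 ≤ κ ∧ (⋂ V ∈ 𝒱, closure V) = {x}})
    ⟨max ℵ₀ #(Set X), le_max_left _ _, {V | IsOpen V ∧ x ∈ V}, fun _ hV => hV.1,
      (mk_set_le _).trans (le_max_right _ _), biInter_closure_isOpen_mem X x⟩
  exact ⟨𝒱, h𝒱open, h𝒱card.trans (le_ciSup bddAbove_of_small x), h𝒱⟩

end Invariants

/-- For any Hausdorff space `X`, `|X| ≤ πχ(X)^(c(X)·nq(X)·wψ_c(X))`. -/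
theorem stmt_12 (X : Type u) [TopologicalSpace X] [T2Space X] :
    #X ≤ piChar X ^ (cellularity X * nq X * wPsiC X) := by
  rcases isEmpty_or_nonempty X with hX | hX
  · simp
  obtain ⟨hc, hcell⟩ := cellularity_spec X
  have hnq := nq_mem_nqSet X
  set κ := cellularity X * nq X
  have hcellκ : ∀ 𝒞 : Set (Set X), (∀ U ∈ 𝒞, IsOpen U ∧ U.Nonempty) →
      𝒞.PairwiseDisjoint id → #𝒞 ≤ κ := fun 𝒞 h𝒞 h𝒞d =>
    (hcell 𝒞 h𝒞 h𝒞d).trans (le_mul_right (aleph0_pos.trans_le hnq.1).ne')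
  have hκnq : κ ∈ nqSet X := mem_nqSet_of_le hnq (le_mul_left (aleph0_pos.trans_le hc).ne')
  have hp := aleph0_le_piChar X
  obtain ⟨B, hB⟩ := exists_isLocalPiBase_mk_le_piChar X
  obtain ⟨ℱ, hℱ, hℱG⟩ := exists_isPiBase_mk_le_power hp (fun x => (hB x).1) (fun x => (hB x).2)
    hcellκ hκnq
  have hG : ℵ₀ ≤ piChar X ^ κ := hp.trans (self_le_power _ (one_le_aleph0.trans hκnq.1))
  have hGκ : (piChar X ^ κ) ^ κ ≤ piChar X ^ κ := by rw [← power_mul, mul_eq_self hκnq.1]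
  calc #X ≤ (piChar X ^ κ) ^ wPsiC X := mk_le_power_of_isPiBase hG hGκ hℱ hℱG hcellκ
        (exists_biInter_closure_eq_singleton_mk_le_wPsiC X)
    _ = piChar X ^ (κ * wPsiC X) := power_mul.symm
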